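/- arXiv:1902.10497 — 5 statements merged into one kernel-verified Lean document; each statement's English description precedes it below -/
import Mathlib

section
/- Suppose T ≥ 4 and let (y_0, (y_u), (z_v)) be any feasible point of the dual problem (4). Then Σ_{v∈N_T^F} z_v S_v = y_0 S_0 (an equation of vectors in ℝ^{N+1}); in particular, comparing the 0-th (numéraire) coordinates, Σ_{v∈N_T^F} z_v = y_0 = 1, so the nonnegative vector z defines a probability measure on Ω. -/
open Finset

/-- A finite-scenario, discrete-time discounted market with horizon `T` and `N + 1` assets.
The filtration `(F_t)` is given by a chain of partitions `P t` of `Ω`: `P 0 = {Ω}`,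
`P T` the singletons, each `P (t+1)` refining `P t`.  `S t v` is the time-`t` price vector
at block `v ∈ P t` (0-th coordinate `1`, bond numéraire), `B` is a nonnegative claim. -/
structure Market (Ω : Type) [Fintype Ω] [DecidableEq Ω] (T N : ℕ) where
  P : ℕ → Finset (Finset Ω)
  S : ℕ → Finset Ω → Fin (N + 1) → ℝ
  B : Ω → ℝ
  hP0 : P 0 = {Finset.univ}
  hPT : P T = Finset.univ.image fun ω => ({ω} : Finset Ω)
  hpart : ∀ t ≤ T, ∀ ω : Ω, ∃! v, v ∈ P t ∧ ω ∈ v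
  hne : ∀ t ≤ T, ∀ v ∈ P t, v.Nonempty
  hrefine : ∀ t < T, ∀ u ∈ P (t + 1), ∃ v ∈ P t, u ⊆ v
  hbond : ∀ t ≤ T, ∀ v ∈ P t, S t v 0 = 1
  hB : ∀ ω, 0 ≤ B ω

namespace Market

variable {Ω : Type} [Fintype Ω] [DecidableEq Ω] {T N : ℕ}

/-- The children `C_F(v)` of a block `v ∈ P t`: the blocks of `P (t+1)` contained in `v`. -/
def C (M : Market Ω T N) (t : ℕ) (v : Finset Ω) : Finset (Finset Ω) :=
  (M.P (t + 1)).filter fun u => u ⊆ v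

/-- Euclidean inner product on `ℝ^{N+1}`. -/
def dot (a b : Fin (N + 1) → ℝ) : ℝ := ∑ i, a i * b i

/-- `blockSum q v = Σ_{ω ∈ v} q ω`, the measure of a block. -/
def blockSum (q : Ω → ℝ) (v : Finset Ω) : ℝ := ∑ ω ∈ v, q ω

/-- Feasibility for the seller's pricing problem (1) under delayed information.
The seller's filtration `G` has vertices `N_0^G = {Ω}`, `N_t^G = P (t-1)` for
`1 ≤ t ≤ T-1`, `N_T^G = P T`; `H t v` is the portfolio held at the `G`-vertex `v`
at time `t` (the parent `a_G(v)` of `v ∈ N_t^G` is encoded as the unique `w ∈ P (t-2)`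
with `v ⊆ w`). -/
def PrimalFeasible (M : Market Ω T N) (κ : ℝ)
    (H : ℕ → Finset Ω → Fin (N + 1) → ℝ) : Prop :=
  -- S_0 · H_0 ≤ κ
  dot (M.S 0 Finset.univ) (H 0 Finset.univ) ≤ κ ∧
  -- B_v ≤ S_v · H_{a_G(v)} for all terminal vertices v = {ω}
  (∀ ω : Ω, ∀ w ∈ M.P (T - 2), ω ∈ w →
    M.B ω ≤ dot (M.S T {ω}) (H (T - 1) w)) ∧
  -- S_u · H_v = S_u · H_{a_G(v)} for t = 1,…,T-2, v ∈ N_t^G, u ∈ C_G(v)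
  (∀ t, 1 ≤ t → t ≤ T - 2 → ∀ v ∈ M.P (t - 1), ∀ w ∈ M.P (t - 2), v ⊆ w →
    ∀ u ∈ M.P t, u ⊆ v →
      dot (M.S t u) (H t v) = dot (M.S t u) (H (t - 1) w)) ∧
  -- S_u · H_v = S_u · H_{a_G(v)} for v ∈ N_{T-1}^G and u ∈ N_{T-1}^F, u ⊆ v
  (∀ v ∈ M.P (T - 2), ∀ w ∈ M.P (T - 3), v ⊆ w →
    ∀ u ∈ M.P (T - 1), u ⊆ v →
      dot (M.S (T - 1) u) (H (T - 1) v) = dot (M.S (T - 1) u) (H (T - 2) w))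

/-- The seller's price `p̃`: optimal value of problem (1), as an extended real. -/
noncomputable def primalValue (M : Market Ω T N) : EReal :=
  sInf {x : EReal | ∃ κ : ℝ, ∃ H : ℕ → Finset Ω → Fin (N + 1) → ℝ,
    M.PrimalFeasible κ H ∧ x = (κ : EReal)}

/-- Feasibility for the dual problem (4): `y0 = 1`, `z ≥ 0` on terminal vertices,
free multipliers `y t u` for `u ∈ P t`, `t = 1,…,T-2`. -/
def Dual4Feasible (M : Market Ω T N) (y0 : ℝ) (y : ℕ → Finset Ω → ℝ)
    (z : Ω → ℝ) : Prop :=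
  (∀ ω, 0 ≤ z ω) ∧
  y0 = 1 ∧
  y0 • M.S 0 Finset.univ = ∑ u ∈ M.P 1, y 1 u • M.S 1 u ∧
  (∀ t ≤ T - 4, ∀ v ∈ M.P t,
    ∑ u ∈ M.C t v,
      (y (t + 1) u • M.S (t + 1) u
        - ∑ μ ∈ M.C (t + 1) u, y (t + 2) μ • M.S (t + 2) μ) = 0) ∧
  (∀ v ∈ M.P (T - 3),
    ∑ u ∈ M.C (T - 3) v,
      (y (T - 2) u • M.S (T - 2) u
        - ∑ μ ∈ M.C (T - 2) u, ∑ γ ∈ M.C (T - 1) μ, blockSum z γ • M.S T γ) = 0)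

/-- Optimal value of the dual problem (4). -/
noncomputable def dual4Value (M : Market Ω T N) : EReal :=
  sSup {x : EReal | ∃ y0 : ℝ, ∃ y : ℕ → Finset Ω → ℝ, ∃ z : Ω → ℝ,
    M.Dual4Feasible y0 y z ∧ x = ((∑ ω : Ω, z ω * M.B ω : ℝ) : EReal)}

/-- Feasibility for the dual problem (6): `q` a probability vector on `Ω`,
free multipliers `y t u` for `u ∈ P t`, `t = 1,…,T-2`. -/
def Dual6Feasible (M : Market Ω T N) (q : Ω → ℝ) (y : ℕ → Finset Ω → ℝ) : Prop :=
  (∀ ω, 0 ≤ q ω) ∧ (∑ ω : Ω, q ω) = 1 ∧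
  M.S 0 Finset.univ = ∑ u ∈ M.P 1, y 1 u • M.S 1 u ∧
  (∀ t ≤ T - 4, ∀ v ∈ M.P t,
    ∑ u ∈ M.C t v,
      (y (t + 1) u • M.S (t + 1) u
        - ∑ μ ∈ M.C (t + 1) u, y (t + 2) μ • M.S (t + 2) μ) = 0) ∧
  (∀ v ∈ M.P (T - 3),
    ∑ u ∈ M.C (T - 3) v, y (T - 2) u • M.S (T - 2) u
      = ∑ u ∈ M.C (T - 3) v, ∑ μ ∈ M.C (T - 2) u, ∑ γ ∈ M.C (T - 1) μ,
          blockSum q γ • M.S T γ)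

/-- Optimal value `d̃` of the dual problem (6). -/
noncomputable def dual6Value (M : Market Ω T N) : EReal :=
  sSup {x : EReal | ∃ q : Ω → ℝ, ∃ y : ℕ → Finset Ω → ℝ,
    M.Dual6Feasible q y ∧ x = ((∑ ω : Ω, q ω * M.B ω : ℝ) : EReal)}

/-- `q` is an equivalent martingale measure for `S` w.r.t. the filtration `F`. -/
def EMM (M : Market Ω T N) (q : Ω → ℝ) : Prop :=
  (∀ ω, 0 < q ω) ∧ (∑ ω : Ω, q ω) = 1 ∧
  ∀ t < T, ∀ v ∈ M.P t,
    blockSum q v • M.S t v = ∑ u ∈ M.C t v, blockSum q u • M.S (t + 1) u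

/-- `α = sup_{Q ∈ M(S,F)} E_Q[B]`, the fully informed seller's price. -/
noncomputable def alpha (M : Market Ω T N) : EReal :=
  sSup {x : EReal | ∃ q : Ω → ℝ, M.EMM q ∧ x = ((∑ ω : Ω, q ω * M.B ω : ℝ) : EReal)}

/-- Feasibility for problem (8). -/
def P8Feasible (M : Market Ω T N) (q : Ω → ℝ) : Prop :=
  (∀ ω, 0 ≤ q ω) ∧ (∑ ω : Ω, q ω) = 1 ∧
  M.S 0 Finset.univ = ∑ u ∈ M.P 1, blockSum q u • M.S 1 u ∧
  (∀ t ≤ T - 4, ∀ v ∈ M.P t,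
    ∑ u ∈ M.C t v, blockSum q u • M.S (t + 1) u
      = ∑ μ ∈ (M.P (t + 2)).filter (fun μ => μ ⊆ v), blockSum q μ • M.S (t + 2) μ) ∧
  (∀ v ∈ M.P (T - 3),
    ∑ u ∈ M.C (T - 3) v, blockSum q u • M.S (T - 2) u
      = ∑ ω ∈ v, q ω • M.S T {ω})

/-- `β`: optimal value of problem (8). -/
noncomputable def beta (M : Market Ω T N) : EReal :=
  sSup {x : EReal | ∃ q : Ω → ℝ, M.P8Feasible q ∧ x = ((∑ ω : Ω, q ω * M.B ω : ℝ) : EReal)}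

/-- Each block of `P (t+1)` has a unique parent block in `P t`. -/
lemma parent_unique (M : Market Ω T N) {t : ℕ} (ht : t + 1 ≤ T)
    {u : Finset Ω} (hu : u ∈ M.P (t + 1)) {v v' : Finset Ω}
    (hv : v ∈ M.P t) (hv' : v' ∈ M.P t) (h1 : u ⊆ v) (h2 : u ⊆ v') : v = v' := by
  obtain ⟨ω, hω⟩ := M.hne (t + 1) ht u hu
  obtain ⟨w, -, hw⟩ := M.hpart t (by omega) ω
  rw [hw v ⟨hv, h1 hω⟩, hw v' ⟨hv', h2 hω⟩]

/-- Flattening a double sum over blocks and their children. -/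
lemma sum_children {α : Type*} [AddCommMonoid α] (M : Market Ω T N) {t : ℕ}
    (ht : t < T) (F : Finset Ω → α) :
    ∑ v ∈ M.P t, ∑ u ∈ M.C t v, F u = ∑ u ∈ M.P (t + 1), F u := by
  simp only [Market.C, Finset.sum_filter]
  rw [Finset.sum_comm]
  refine Finset.sum_congr rfl fun u hu => ?_
  obtain ⟨v, hv, hsub⟩ := M.hrefine t ht u hu
  rw [Finset.sum_eq_single v
    (fun v' hv' hne => if_neg fun h => hne (M.parent_unique ht hu hv' hv h hsub))
    (fun h => absurd hv h), if_pos hsub]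

end Market

/-- For any feasible point `(y0, y, z)` of the dual problem (4),
`Σ_{v ∈ N_T^F} z_v S_v = y0 • S_0`; comparing 0-th (numéraire) coordinates,
`Σ_v z_v = y0 = 1`, so the nonnegative vector `z` is a probability measure on `Ω`. -/
theorem dual4_z_is_probability {Ω : Type} [Fintype Ω] [DecidableEq Ω] [Nonempty Ω]
    {T N : ℕ} (hT : 4 ≤ T) (M : Market Ω T N)
    (y0 : ℝ) (y : ℕ → Finset Ω → ℝ) (z : Ω → ℝ)
    (hfeas : M.Dual4Feasible y0 y z) :
    (∑ v ∈ M.P T, Market.blockSum z v • M.S T v) = y0 • M.S 0 Finset.univ ∧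
    (∑ v ∈ M.P T, Market.blockSum z v) = y0 ∧
    y0 = 1 ∧
    (∑ ω : Ω, z ω) = 1 := by
  obtain ⟨hz, hy0, hS0, hmid, hlast⟩ := hfeas
  obtain ⟨k, rfl⟩ : ∃ k, T = k + 4 := ⟨T - 4, by omega⟩
  have e2 : k + 4 - 2 = k + 2 := by omega
  have e3 : k + 4 - 3 = k + 1 := by omega
  rw [e3, e2] at hlast
  rw [show k + 4 - 4 = k from by omega] at hmid
  set f : ℕ → Fin (N + 1) → ℝ := fun s => ∑ u ∈ M.P s, y s u • M.S s u with hf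
  -- the middle constraints propagate `f` from time 1 to time k+2 = T-2
  have hstep : ∀ t ≤ k, f (t + 1) = f (t + 2) := by
    intro t ht
    calc f (t + 1) = ∑ v ∈ M.P t, ∑ u ∈ M.C t v, y (t + 1) u • M.S (t + 1) u :=
          (M.sum_children (by omega) _).symm
      _ = ∑ v ∈ M.P t, ∑ u ∈ M.C t v,
            ∑ μ ∈ M.C (t + 1) u, y (t + 2) μ • M.S (t + 2) μ :=
          Finset.sum_congr rfl fun v hv => sub_eq_zero.mp
            (by rw [← Finset.sum_sub_distrib]; exact hmid t ht v hv)
      _ = ∑ u ∈ M.P (t + 1), ∑ μ ∈ M.C (t + 1) u, y (t + 2) μ • M.S (t + 2) μ :=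
          M.sum_children (by omega) _
      _ = f (t + 2) := M.sum_children (by omega) _
  have hchain : ∀ j ≤ k + 1, f 1 = f (j + 1) := by
    intro j hj
    induction j with
    | zero => rfl
    | succ n ih => exact (ih (by omega)).trans (hstep n (by omega))
  -- the last constraint identifies f (k+2) with the terminal sum
  have hterm : f (k + 2) = ∑ v ∈ M.P (k + 4), Market.blockSum z v • M.S (k + 4) v := by
    calc f (k + 2)
        = ∑ v ∈ M.P (k + 1), ∑ u ∈ M.C (k + 1) v, y (k + 2) u • M.S (k + 2) u :=
          (M.sum_children (by omega) _).symm
      _ = ∑ v ∈ M.P (k + 1), ∑ u ∈ M.C (k + 1) v, ∑ μ ∈ M.C (k + 2) u,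
            ∑ γ ∈ M.C (k + 3) μ, Market.blockSum z γ • M.S (k + 4) γ :=
          Finset.sum_congr rfl fun v hv => sub_eq_zero.mp
            (by rw [← Finset.sum_sub_distrib]; exact hlast v hv)
      _ = ∑ u ∈ M.P (k + 2), ∑ μ ∈ M.C (k + 2) u,
            ∑ γ ∈ M.C (k + 3) μ, Market.blockSum z γ • M.S (k + 4) γ :=
          M.sum_children (by omega) _
      _ = ∑ μ ∈ M.P (k + 3), ∑ γ ∈ M.C (k + 3) μ,
            Market.blockSum z γ • M.S (k + 4) γ := M.sum_children (by omega) _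
      _ = ∑ γ ∈ M.P (k + 4), Market.blockSum z γ • M.S (k + 4) γ :=
          M.sum_children (by omega) _
  have goal1 : (∑ v ∈ M.P (k + 4), Market.blockSum z v • M.S (k + 4) v)
      = y0 • M.S 0 Finset.univ := by
    rw [← hterm, ← hchain (k + 1) le_rfl, hS0]
  have goal2 : (∑ v ∈ M.P (k + 4), Market.blockSum z v) = y0 := by
    have h0 := congrFun goal1 0
    have huniv : Finset.univ ∈ M.P 0 := by rw [M.hP0]; exact Finset.mem_singleton_self _
    rw [Finset.sum_apply, Pi.smul_apply, smul_eq_mul, M.hbond 0 (by omega) _ huniv,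
      mul_one] at h0
    rw [← h0]
    refine Finset.sum_congr rfl fun v hv => ?_
    rw [Pi.smul_apply, smul_eq_mul, M.hbond (k + 4) le_rfl v hv, mul_one]
  refine ⟨goal1, goal2, hy0, ?_⟩
  have : (∑ v ∈ M.P (k + 4), Market.blockSum z v) = ∑ ω : Ω, z ω := by
    rw [M.hPT, Finset.sum_image (fun a _ b _ h => Finset.singleton_injective h)]
    simp [Market.blockSum]
  rw [← this, goal2, hy0]
end

section
/- Suppose T ≥ 4 and that the set M(S,F) of equivalent martingale measures is nonempty. Then d̃ − α ≥ 0, i.e. the optimal value d̃ of the dual problem (6) (the price of B offered by the seller with delayed information) is greater than or equal to α = sup_{Q∈M(S,F)} E_Q[B] (the price of B offered by a seller with full information). -/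
open Finset

/-- If `T ≥ 4` and there exists an equivalent martingale measure, then
`d̃ - α ≥ 0`: the delayed-information seller's price `d̃` (the optimal value of the dual
problem (6)) is at least the full-information price `α = sup_{Q ∈ M(S,F)} E_Q[B]`. -/
theorem alpha_le_dual6 {Ω : Type} [Fintype Ω] [DecidableEq Ω] [Nonempty Ω]
    {T N : ℕ} (hT : 4 ≤ T) (M : Market Ω T N) (hM : ∃ q : Ω → ℝ, M.EMM q) :
    M.alpha ≤ M.dual6Value := by
  apply sSup_le_sSup
  rintro x ⟨q, ⟨hpos, hsum, hmart⟩, rfl⟩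
  refine ⟨q, fun t u => Market.blockSum q u,
    ⟨fun ω => (hpos ω).le, hsum, ?_, ?_, ?_⟩, rfl⟩
  · have h0 : (Finset.univ : Finset Ω) ∈ M.P 0 := by
      rw [M.hP0]; exact Finset.mem_singleton_self _
    have hm := hmart 0 (by omega) Finset.univ h0
    have hb : Market.blockSum q Finset.univ = 1 := hsum
    rw [hb, one_smul] at hm
    rw [hm]
    unfold Market.C
    rw [Finset.filter_true_of_mem (fun u _ => Finset.subset_univ u)]
  · intro t ht v hv
    apply Finset.sum_eq_zero
    intro u hu
    have hu' : u ∈ M.P (t + 1) := (Finset.mem_filter.mp hu).1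
    rw [sub_eq_zero]
    exact hmart (t + 1) (by omega) u hu'
  · intro v hv
    apply Finset.sum_congr rfl
    intro u hu
    have hu' : u ∈ M.P (T - 2) := by
      have h := (Finset.mem_filter.mp hu).1
      rwa [show T - 3 + 1 = T - 2 by omega] at h
    have h1 := hmart (T - 2) (by omega) u hu'
    rw [show T - 2 + 1 = T - 1 by omega] at h1
    rw [h1]
    apply Finset.sum_congr rfl
    intro μ hμ
    have hμ' : μ ∈ M.P (T - 1) := by
      have h := (Finset.mem_filter.mp hμ).1
      rwa [show T - 2 + 1 = T - 1 by omega] at h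
    have h2 := hmart (T - 1) (by omega) μ hμ'
    rwa [show T - 1 + 1 = T by omega] at h2
end

section
/- Suppose T ≥ 4, let Q = (q_ω) ∈ M(S,F) be an equivalent martingale measure, and define y_u := Σ_{ω∈u} q_ω for every u ∈ N_t^F, t = 1,…,T−2. Then the pair (Q, y) is feasible for the dual problem (6); in particular E_Q[B] ≤ d̃. -/
open Finset

/-- If `Q = (q_ω) ∈ M(S,F)` and `y_u := Σ_{ω ∈ u} q_ω` for each block `u`,
then `(Q, y)` is feasible for the dual problem (6); in particular `E_Q[B] ≤ d̃`. -/
theorem emm_feasible_dual6 {Ω : Type} [Fintype Ω] [DecidableEq Ω] [Nonempty Ω]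
    {T N : ℕ} (hT : 4 ≤ T) (M : Market Ω T N) (q : Ω → ℝ) (hq : M.EMM q) :
    M.Dual6Feasible q (fun _ u => Market.blockSum q u) ∧
    ((∑ ω : Ω, q ω * M.B ω : ℝ) : EReal) ≤ M.dual6Value := by
  obtain ⟨hpos, hsum, hmart⟩ := hq
  have hT3 : T - 3 + 1 = T - 2 := by omega
  have hT2 : T - 2 + 1 = T - 1 := by omega
  have hT1 : T - 1 + 1 = T := by omega
  have hfeas : M.Dual6Feasible q (fun _ u => Market.blockSum q u) := by
    refine ⟨fun ω => (hpos ω).le, hsum, ?_, ?_, ?_⟩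
    · have h0 := hmart 0 (by omega) Finset.univ
        (by rw [M.hP0]; exact Finset.mem_singleton_self _)
      have hbs : Market.blockSum q Finset.univ = 1 := hsum
      rw [hbs, one_smul] at h0
      rw [h0]
      congr 1
      unfold Market.C
      exact Finset.filter_true_of_mem (fun u _ => Finset.subset_univ u)
    · intro t ht v hv
      apply Finset.sum_eq_zero
      intro u hu
      have hu' : u ∈ M.P (t + 1) := (Finset.mem_filter.mp hu).1
      have h := hmart (t + 1) (by omega) u hu'
      simp only []
      rw [h]
      simp
    · intro v hv
      apply Finset.sum_congr rfl
      intro u hu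
      have hu' : u ∈ M.P (T - 2) := by
        have := (Finset.mem_filter.mp hu).1
        rwa [hT3] at this
      have h1 := hmart (T - 2) (by omega) u hu'
      rw [hT2] at h1
      simp only []
      rw [h1]
      apply Finset.sum_congr rfl
      intro μ hμ
      have hμ' : μ ∈ M.P (T - 1) := by
        have := (Finset.mem_filter.mp hμ).1
        rwa [hT2] at this
      have h2 := hmart (T - 1) (by omega) μ hμ'
      rwa [hT1] at h2
  refine ⟨hfeas, ?_⟩
  exact le_sSup ⟨q, fun _ u => Market.blockSum q u, hfeas, rfl⟩
end

section
/- Suppose T ≥ 4 and M(S,F) ≠ ∅. Then α ≤ β ≤ d̃: the optimal value β of problem (8) lies between the price α of B offered by the seller with full information and the price d̃ offered by the seller with delayed information. -/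
open Finset

namespace Market

variable {Ω : Type} [Fintype Ω] [DecidableEq Ω] {T N : ℕ}

/-! ### Auxiliary lemmas -/

lemma block_eq_block (M : Market Ω T N) {t : ℕ} (ht : t ≤ T) {v v' : Finset Ω}
    (hv : v ∈ M.P t) (hv' : v' ∈ M.P t) {ω : Ω} (hω : ω ∈ v) (hω' : ω ∈ v') : v = v' := by
  obtain ⟨w, _, huniq⟩ := M.hpart t ht ω
  rw [huniq v ⟨hv, hω⟩, huniq v' ⟨hv', hω'⟩]

lemma exists_ancestor (M : Market Ω T N) :
    ∀ (k t : ℕ), t + k ≤ T → ∀ γ ∈ M.P (t + k), ∃ u ∈ M.P t, γ ⊆ u := by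
  intro k
  induction k with
  | zero => exact fun t _ γ hγ => ⟨γ, hγ, subset_rfl⟩
  | succ k ih =>
    intro t h γ hγ
    obtain ⟨w, hw, hsub⟩ := M.hrefine (t + k) (by omega) γ hγ
    obtain ⟨u, hu, hsub'⟩ := ih t (by omega) w hw
    exact ⟨u, hu, hsub.trans hsub'⟩

lemma child_subset (M : Market Ω T N) {t : ℕ} (ht : t + 1 ≤ T) {v u : Finset Ω}
    (hv : v ∈ M.P t) (hu : u ∈ M.P (t + 1)) {ω : Ω} (hωu : ω ∈ u) (hωv : ω ∈ v) : u ⊆ v := by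
  obtain ⟨v', hv', hsub⟩ := M.hrefine t (by omega) u hu
  exact (M.block_eq_block (by omega) hv' hv (hsub hωu) hωv) ▸ hsub

lemma sum_collapse (M : Market Ω T N) {t t1 s : ℕ} (h1 : t1 = t + 1) (hts : t1 ≤ s)
    (hs : s ≤ T) {v : Finset Ω} (hv : v ∈ M.P t) (f : Finset Ω → Fin (N + 1) → ℝ) :
    ∑ u ∈ (M.P t1).filter (fun u => u ⊆ v), ∑ γ ∈ (M.P s).filter (fun γ => γ ⊆ u), f γ
      = ∑ γ ∈ (M.P s).filter (fun γ => γ ⊆ v), f γ := by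
  subst h1
  rw [← Finset.sum_biUnion]
  · congr 1
    ext γ
    simp only [Finset.mem_biUnion, Finset.mem_filter]
    constructor
    · rintro ⟨u, ⟨hu, huv⟩, hγ, hγu⟩
      exact ⟨hγ, hγu.trans huv⟩
    · rintro ⟨hγ, hγv⟩
      obtain ⟨u, hu, hγu⟩ := M.exists_ancestor (s - (t + 1)) (t + 1) (by omega) γ
        (by rw [show t + 1 + (s - (t + 1)) = s by omega]; exact hγ)
      obtain ⟨ω, hω⟩ := M.hne s hs γ hγ
      exact ⟨u, ⟨hu, M.child_subset (by omega) hv hu (hγu hω) (hγv hω)⟩, hγ, hγu⟩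
  · intro u hu u' hu' hne'
    simp only [Finset.coe_filter, Set.mem_setOf_eq] at hu hu'
    refine Finset.disjoint_left.mpr fun γ hγ hγ' => hne' ?_
    simp only [Finset.mem_filter] at hγ hγ'
    obtain ⟨ω, hω⟩ := M.hne s hs γ hγ.1
    exact M.block_eq_block (by omega) hu.1 hu'.1 (hγ.2 hω) (hγ'.2 hω)

lemma filter_self_level (M : Market Ω T N) {t : ℕ} (ht : t ≤ T) {v : Finset Ω}
    (hv : v ∈ M.P t) : (M.P t).filter (fun γ => γ ⊆ v) = {v} := by
  ext γ
  simp only [Finset.mem_filter, Finset.mem_singleton]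
  constructor
  · rintro ⟨hγ, hγv⟩
    obtain ⟨ω, hω⟩ := M.hne t ht γ hγ
    exact M.block_eq_block ht hγ hv hω (hγv hω)
  · rintro rfl; exact ⟨hv, subset_rfl⟩

lemma emm_level (M : Market Ω T N) {q : Ω → ℝ} (hq : M.EMM q) :
    ∀ (k t : ℕ), t + k ≤ T → ∀ s, s = t + k → ∀ v ∈ M.P t,
      blockSum q v • M.S t v
        = ∑ γ ∈ (M.P s).filter (fun γ => γ ⊆ v), blockSum q γ • M.S s γ := by
  intro k
  induction k with
  | zero =>
    intro t h s hs v hv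
    subst hs
    rw [M.filter_self_level (by omega) hv, Finset.sum_singleton]
  | succ k ih =>
    intro t h s hs v hv
    have hm := hq.2.2 t (by omega) v hv
    rw [hm]
    have step : ∀ u ∈ M.C t v, blockSum q u • M.S (t + 1) u
        = ∑ γ ∈ (M.P s).filter (fun γ => γ ⊆ u), blockSum q γ • M.S s γ := by
      intro u hu
      exact ih (t + 1) (by omega) s (by omega) u (Finset.mem_filter.mp hu).1
    rw [Finset.sum_congr rfl step]
    exact M.sum_collapse rfl (by omega) (by omega) hv _

lemma sum_filter_top (M : Market Ω T N) {v : Finset Ω} (f : Finset Ω → Fin (N + 1) → ℝ) :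
    ∑ γ ∈ (M.P T).filter (fun γ => γ ⊆ v), f γ = ∑ ω ∈ v, f {ω} := by
  have h : (M.P T).filter (fun γ => γ ⊆ v) = v.image (fun ω => ({ω} : Finset Ω)) := by
    rw [M.hPT]
    ext γ
    simp only [Finset.mem_filter, Finset.mem_image, Finset.mem_univ, true_and]
    constructor
    · rintro ⟨⟨ω, rfl⟩, hsub⟩
      exact ⟨ω, Finset.singleton_subset_iff.mp hsub, rfl⟩
    · rintro ⟨ω, hω, rfl⟩
      exact ⟨⟨ω, rfl⟩, Finset.singleton_subset_iff.mpr hω⟩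
  rw [h, Finset.sum_image (fun a _ b _ hab => Finset.singleton_injective hab)]

lemma blockSum_singleton (q : Ω → ℝ) (ω : Ω) : blockSum q {ω} = q ω :=
  Finset.sum_singleton _ _

/-- Every equivalent martingale measure is feasible for problem (8). -/
lemma emm_p8 (M : Market Ω T N) (hT : 4 ≤ T) {q : Ω → ℝ} (hq : M.EMM q) :
    M.P8Feasible q := by
  obtain ⟨hpos, hsum, hmart⟩ := hq
  have hq' : M.EMM q := ⟨hpos, hsum, hmart⟩
  have huniv : Finset.univ ∈ M.P 0 := by rw [M.hP0]; exact Finset.mem_singleton_self _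
  have hbuniv : blockSum q Finset.univ = 1 := hsum
  refine ⟨fun ω => (hpos ω).le, hsum, ?_, ?_, ?_⟩
  · have h := hmart 0 (by omega) Finset.univ huniv
    rw [hbuniv, one_smul] at h
    rw [h]
    unfold C
    rw [Finset.filter_true_of_mem (fun u _ => Finset.subset_univ u)]
  · intro t ht v hv
    have step : ∀ u ∈ M.C t v, blockSum q u • M.S (t + 1) u
        = ∑ μ ∈ (M.P (t + 2)).filter (fun μ => μ ⊆ u), blockSum q μ • M.S (t + 2) μ := by
      intro u hu
      exact M.emm_level hq' 1 (t + 1) (by omega) (t + 2) (by omega) u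
        (Finset.mem_filter.mp hu).1
    rw [Finset.sum_congr rfl step]
    exact M.sum_collapse rfl (by omega) (by omega) hv _
  · intro v hv
    have step : ∀ u ∈ M.C (T - 3) v, blockSum q u • M.S (T - 2) u
        = ∑ γ ∈ (M.P T).filter (fun γ => γ ⊆ u), blockSum q γ • M.S T γ := by
      intro u hu
      have hu' : u ∈ M.P (T - 2) := by
        have := (Finset.mem_filter.mp hu).1
        rwa [show T - 3 + 1 = T - 2 by omega] at this
      exact M.emm_level hq' 2 (T - 2) (by omega) T (by omega) u hu'
    rw [Finset.sum_congr rfl step]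
    have hc : ∀ u : Finset Ω, M.C (T - 3) v = (M.P (T - 2)).filter (fun u => u ⊆ v) := by
      intro u; unfold C; rw [show T - 3 + 1 = T - 2 by omega]
    rw [hc v]
    rw [M.sum_collapse (show T - 2 = (T - 3) + 1 by omega) (by omega) (by omega) hv]
    rw [M.sum_filter_top]
    exact Finset.sum_congr rfl fun ω _ => by rw [blockSum_singleton]

/-- Every solution of problem (8) yields a feasible point of the dual problem (6)
with the multipliers `y t u := blockSum q u`. -/
lemma p8_dual6 (M : Market Ω T N) (hT : 4 ≤ T) {q : Ω → ℝ} (hq : M.P8Feasible q) :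
    M.Dual6Feasible q (fun _ u => blockSum q u) := by
  obtain ⟨hpos, hsum, h0, hmid, hlast⟩ := hq
  refine ⟨hpos, hsum, h0, ?_, ?_⟩
  · intro t ht v hv
    rw [Finset.sum_sub_distrib, sub_eq_zero]
    rw [hmid t ht v hv]
    exact (M.sum_collapse (t := t) (t1 := t + 1) (s := t + 2) rfl (by omega) (by omega) hv _).symm
  · intro v hv
    rw [hlast v hv]
    have inner : ∀ u ∈ M.C (T - 3) v,
        ∑ μ ∈ M.C (T - 2) u, ∑ γ ∈ M.C (T - 1) μ, blockSum q γ • M.S T γ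
          = ∑ γ ∈ (M.P T).filter (fun γ => γ ⊆ u), blockSum q γ • M.S T γ := by
      intro u hu
      have hu' : u ∈ M.P (T - 2) := by
        have := (Finset.mem_filter.mp hu).1
        rwa [show T - 3 + 1 = T - 2 by omega] at this
      have hC1 : ∀ μ : Finset Ω, M.C (T - 1) μ = (M.P T).filter (fun γ => γ ⊆ μ) := by
        intro μ; unfold C; rw [show T - 1 + 1 = T by omega]
      have hC2 : M.C (T - 2) u = (M.P (T - 1)).filter (fun μ => μ ⊆ u) := by
        unfold C; rw [show T - 2 + 1 = T - 1 by omega]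
      calc ∑ μ ∈ M.C (T - 2) u, ∑ γ ∈ M.C (T - 1) μ, blockSum q γ • M.S T γ
          = ∑ μ ∈ (M.P (T - 1)).filter (fun μ => μ ⊆ u),
              ∑ γ ∈ (M.P T).filter (fun γ => γ ⊆ μ), blockSum q γ • M.S T γ := by
            rw [hC2]; exact Finset.sum_congr rfl fun μ _ => by rw [hC1 μ]
        _ = ∑ γ ∈ (M.P T).filter (fun γ => γ ⊆ u), blockSum q γ • M.S T γ :=
            M.sum_collapse (show T - 1 = (T - 2) + 1 by omega) (by omega) (by omega) hu' _
    rw [Finset.sum_congr rfl inner]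
    have hc : M.C (T - 3) v = (M.P (T - 2)).filter (fun u => u ⊆ v) := by
      unfold C; rw [show T - 3 + 1 = T - 2 by omega]
    rw [hc, M.sum_collapse (show T - 2 = (T - 3) + 1 by omega) (by omega) (by omega) hv,
      M.sum_filter_top]
    exact (Finset.sum_congr rfl fun ω _ => by rw [blockSum_singleton]).symm

end Market

/-- If `T ≥ 4` and `M(S,F) ≠ ∅`, then `α ≤ β ≤ d̃`: the optimal value `β`
of problem (8) lies between the fully informed seller's price `α` and the delayed
information seller's price `d̃`. -/
theorem alpha_le_beta_le_dual6 {Ω : Type} [Fintype Ω] [DecidableEq Ω] [Nonempty Ω]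
    {T N : ℕ} (hT : 4 ≤ T) (M : Market Ω T N) (hM : ∃ q : Ω → ℝ, M.EMM q) :
    M.alpha ≤ M.beta ∧ M.beta ≤ M.dual6Value := by
  constructor
  · apply sSup_le_sSup
    rintro x ⟨q, hq, rfl⟩
    exact ⟨q, M.emm_p8 hT hq, rfl⟩
  · apply sSup_le_sSup
    rintro x ⟨q, hq, rfl⟩
    exact ⟨q, fun _ u => Market.blockSum q u, M.p8_dual6 hT hq, rfl⟩
end

section
/- Suppose T ≥ 4, let q = (q_ω) be a probability vector feasible for problem (8), and define y_u := Σ_{ω∈u} q_ω for every u ∈ N_t^F, t = 1,…,T−2. Then the pair (q, y) is feasible for the dual problem (6). Consequently β ≤ d̃. -/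
open Finset

section Aux

variable {Ω : Type} [Fintype Ω] [DecidableEq Ω] {T N : ℕ}

lemma Market.refine_trans (M : Market Ω T N) :
    ∀ s ≤ T, ∀ t ≤ s, ∀ u ∈ M.P s, ∃ w ∈ M.P t, u ⊆ w := by
  intro s hs
  induction s with
  | zero =>
    intro t ht u hu
    interval_cases t
    exact ⟨u, hu, subset_rfl⟩
  | succ n ih =>
    intro t ht u hu
    rcases eq_or_lt_of_le ht with h | h
    · exact ⟨u, h ▸ hu, subset_rfl⟩
    · obtain ⟨v, hv, huv⟩ := M.hrefine n (by omega) u hu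
      obtain ⟨w, hw, hvw⟩ := ih (by omega) t (by omega) v hv
      exact ⟨w, hw, huv.trans hvw⟩

lemma Market.sum_children_s7 {M₀ : Type*} [AddCommMonoid M₀] (M : Market Ω T N)
    {t s s' : ℕ} (hts : t ≤ s) (hs' : s' = s + 1) (hs : s' ≤ T)
    {v : Finset Ω} (hv : v ∈ M.P t) (F : Finset Ω → M₀) :
    ∑ u ∈ (M.P s).filter (· ⊆ v), ∑ μ ∈ (M.P s').filter (· ⊆ u), F μ
      = ∑ μ ∈ (M.P s').filter (· ⊆ v), F μ := by
  subst hs'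
  rw [← Finset.sum_biUnion]
  · congr 1
    ext μ
    simp only [Finset.mem_biUnion, Finset.mem_filter]
    constructor
    · rintro ⟨u, ⟨hu, huv⟩, hμ, hμu⟩
      exact ⟨hμ, hμu.trans huv⟩
    · rintro ⟨hμ, hμv⟩
      obtain ⟨u, hu, hμu⟩ := M.hrefine s (by omega) μ hμ
      refine ⟨u, ⟨hu, ?_⟩, hμ, hμu⟩
      obtain ⟨w, hw, huw⟩ := M.refine_trans s (by omega) t hts u hu
      obtain ⟨ω, hω⟩ := M.hne (s + 1) hs μ hμ
      obtain ⟨x, _, huniq⟩ := M.hpart t (by omega) ω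
      have hwv : w = v := by
        rw [huniq w ⟨hw, huw (hμu hω)⟩, huniq v ⟨hv, hμv hω⟩]
      exact hwv ▸ huw
  · intro a ha b hb hab
    refine Finset.disjoint_left.2 ?_
    intro μ hμa hμb
    simp only [Finset.coe_filter, Set.mem_setOf_eq] at ha hb
    simp only [Finset.mem_filter] at hμa hμb
    obtain ⟨ω, hω⟩ := M.hne (s + 1) hs μ hμa.1
    obtain ⟨x, _, huniq⟩ := M.hpart s (by omega) ω
    exact hab (by rw [huniq a ⟨ha.1, hμa.2 hω⟩, huniq b ⟨hb.1, hμb.2 hω⟩])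

lemma Market.p8_to_dual6 (M : Market Ω T N) (hT : 4 ≤ T) (q : Ω → ℝ)
    (hq : M.P8Feasible q) :
    M.Dual6Feasible q (fun _ u => Market.blockSum q u) := by
  obtain ⟨h1, h2, h3, h4, h5⟩ := hq
  refine ⟨h1, h2, h3, ?_, ?_⟩
  · intro t ht v hv
    rw [Finset.sum_sub_distrib, sub_eq_zero]
    have h4' := h4 t ht v hv
    simp only [Market.C] at h4' ⊢
    rw [M.sum_children_s7 (Nat.le_succ t) rfl (by omega) hv]
    exact h4'
  · intro v hv
    have h5' := h5 v hv
    have e1 : T - 3 + 1 = T - 2 := by omega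
    have e2 : T - 2 + 1 = T - 1 := by omega
    have e3 : T - 1 + 1 = T := by omega
    simp only [Market.C, e1, e2, e3] at h5' ⊢
    rw [M.sum_children_s7 (by omega : T - 3 ≤ T - 2) e2.symm (by omega) hv,
        M.sum_children_s7 (by omega : T - 3 ≤ T - 1) e3.symm le_rfl hv]
    rw [h5']
    have him : (M.P T).filter (· ⊆ v) = v.image (fun ω => ({ω} : Finset Ω)) := by
      ext γ
      simp only [Finset.mem_filter, Finset.mem_image, M.hPT, Finset.mem_univ,
        true_and]
      constructor
      · rintro ⟨⟨ω, rfl⟩, hsub⟩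
        exact ⟨ω, by simpa using hsub, rfl⟩
      · rintro ⟨ω, hω, rfl⟩
        exact ⟨⟨ω, rfl⟩, by simpa⟩
    rw [him, Finset.sum_image (fun a _ b _ h => Finset.singleton_injective h)]
    simp [Market.blockSum]

end Aux

/-- If `q` is feasible for problem (8) and `y_u := Σ_{ω ∈ u} q_ω` for each
block `u`, then `(q, y)` is feasible for the dual problem (6); consequently `β ≤ d̃`. -/
theorem p8_feasible_dual6 {Ω : Type} [Fintype Ω] [DecidableEq Ω] [Nonempty Ω]
    {T N : ℕ} (hT : 4 ≤ T) (M : Market Ω T N) (q : Ω → ℝ) (hq : M.P8Feasible q) :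
    M.Dual6Feasible q (fun _ u => Market.blockSum q u) ∧
    M.beta ≤ M.dual6Value := by
  refine ⟨M.p8_to_dual6 hT q hq, ?_⟩
  apply sSup_le_sSup
  rintro x ⟨q', hq', rfl⟩
  exact ⟨q', _, M.p8_to_dual6 hT q' hq', rfl⟩
end
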